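/- Let θ ∈ [a,b] ⊆ ℝ with a < b, and suppose Z is a complex number satisfying |Z - exp(iθπ/(b-a))| < 1/2. Define f(θ) = sin(π/(b-a) · (θ - (a+b)/2)). If Im(exp(-i(a+b)π/(2(b-a))) · Z) ≤ 0 then θ ∈ [a, (a+2b)/3], and if Im(exp(-i(a+b)π/(2(b-a))) · Z) > 0 then θ ∈ [(2a+b)/3, b]. -/

import Mathlib

/-!
Rotating by `exp (-i(a+b)π/(2(b-a)))` turns the sample `exp (iθπ/(b-a))` into `exp (i x)` with
`x = π/(b-a) · (θ - (a+b)/2) ∈ [-π/2, π/2]`, and a rotation moves `Z` by less than `1/2`, so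
the imaginary part of the rotated `Z` is within `1/2` of `sin x`. Its sign therefore bounds
`sin x` by `± 1/2`, i.e. `x` by `± π/6`, which corresponds to `θ` lying beyond the one-third
points of `[a, b]`.
-/

open Complex Real Set

theorem abs_im_exp_mul_sub_sin_le (ψ φ : ℝ) (Z : ℂ) :
    |(exp (ψ * I) * Z).im - Real.sin (ψ + φ)| ≤ ‖Z - exp (φ * I)‖ := by
  have hrot :
      (exp (ψ * I) * Z).im - Real.sin (ψ + φ) = (exp (ψ * I) * (Z - exp (φ * I))).im := by
    rw [mul_sub, ← Complex.exp_add, ← add_mul, ← ofReal_add, sub_im, exp_ofReal_mul_I_im]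
  calc |(exp (ψ * I) * Z).im - Real.sin (ψ + φ)|
      ≤ ‖exp (ψ * I) * (Z - exp (φ * I))‖ := hrot ▸ abs_im_le_norm _
    _ = ‖Z - exp (φ * I)‖ := by rw [norm_mul, norm_exp_ofReal_mul_I, one_mul]

/-- In the paper's notation, `f θ = sin (centeredPhase a b θ)`. -/
noncomputable def centeredPhase (a b θ : ℝ) : ℝ := π / (b - a) * (θ - (a + b) / 2)

section centeredPhase

variable {a b : ℝ}

theorem centeredPhase_strictMono (hab : a < b) : StrictMono (centeredPhase a b) := fun _ _ h =>
  mul_lt_mul_of_pos_left (by linarith) (div_pos pi_pos (sub_pos.mpr hab))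

theorem centeredPhase_left (hab : a < b) : centeredPhase a b a = -(π / 2) := by
  have : b - a ≠ 0 := (sub_pos.mpr hab).ne'
  unfold centeredPhase; field_simp; ring

theorem centeredPhase_right (hab : a < b) : centeredPhase a b b = π / 2 := by
  have : b - a ≠ 0 := (sub_pos.mpr hab).ne'
  unfold centeredPhase; field_simp; ring

theorem centeredPhase_one_third (hab : a < b) :
    centeredPhase a b ((2 * a + b) / 3) = -(π / 6) := by
  have : b - a ≠ 0 := (sub_pos.mpr hab).ne'
  unfold centeredPhase; field_simp; ring

theorem centeredPhase_two_thirds (hab : a < b) : centeredPhase a b ((a + 2 * b) / 3) = π / 6 := by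
  have : b - a ≠ 0 := (sub_pos.mpr hab).ne'
  unfold centeredPhase; field_simp; ring

theorem centeredPhase_eq (hab : a < b) (θ : ℝ) :
    centeredPhase a b θ = -((a + b) * π / (2 * (b - a))) + θ * π / (b - a) := by
  have : b - a ≠ 0 := (sub_pos.mpr hab).ne'
  unfold centeredPhase; field_simp; ring

theorem centeredPhase_mem_Icc (hab : a < b) {θ : ℝ} (hθ : θ ∈ Icc a b) :
    centeredPhase a b θ ∈ Icc (-(π / 2)) (π / 2) := by
  rw [← centeredPhase_left hab, ← centeredPhase_right hab]
  exact ⟨(centeredPhase_strictMono hab).monotone hθ.1,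
    (centeredPhase_strictMono hab).monotone hθ.2⟩

end centeredPhase

theorem lt_pi_div_six_of_sin_lt {x : ℝ} (hx : x ∈ Icc (-(π / 2)) (π / 2))
    (h : Real.sin x < 1 / 2) :
    x < π / 6 := by
  rw [← sin_pi_div_six] at h
  exact strictMonoOn_sin.lt_iff_lt hx ⟨by linarith [pi_pos], by linarith [pi_pos]⟩ |>.mp h

theorem neg_pi_div_six_lt_of_lt_sin {x : ℝ} (hx : x ∈ Icc (-(π / 2)) (π / 2))
    (h : -(1 / 2) < Real.sin x) :
    -(π / 6) < x := by
  rw [← sin_pi_div_six, ← Real.sin_neg] at h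
  exact strictMonoOn_sin.lt_iff_lt ⟨by linarith [pi_pos], by linarith [pi_pos]⟩ hx |>.mp h

/-- Interval refinement via a noisy sample of `exp(iθπ/(b-a))`.
If `θ ∈ [a,b]`, `a < b`, and `|Z - exp(iθπ/(b-a))| < 1/2`, then the sign of
`Im(exp(-i(a+b)π/(2(b-a))) · Z)` determines whether `θ ∈ [a,(a+2b)/3]`
or `θ ∈ [(2a+b)/3, b]`. -/
theorem stmt2 (a b θ : ℝ) (hab : a < b) (hθ : θ ∈ Set.Icc a b) (Z : ℂ)
    (hZ : ‖Z - Complex.exp (Complex.I * (θ * Real.pi / (b - a)))‖ < 1 / 2) :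
    (((Complex.exp (-Complex.I * ((a + b) * Real.pi / (2 * (b - a)))) * Z).im ≤ 0 →
        θ ∈ Set.Icc a ((a + 2 * b) / 3)) ∧
     (0 < (Complex.exp (-Complex.I * ((a + b) * Real.pi / (2 * (b - a)))) * Z).im →
        θ ∈ Set.Icc ((2 * a + b) / 3) b)) := by
  have hψ : -Complex.I * ((a + b) * Real.pi / (2 * (b - a)))
      = ((-((a + b) * π / (2 * (b - a))) : ℝ) : ℂ) * I := by push_cast; ring
  have hφ : Complex.I * (θ * Real.pi / (b - a)) = ((θ * π / (b - a) : ℝ) : ℂ) * I := by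
    push_cast; ring
  rw [hψ]
  rw [hφ] at hZ
  have hclose := (abs_im_exp_mul_sub_sin_le (-((a + b) * π / (2 * (b - a)))) _ Z).trans_lt hZ
  rw [← centeredPhase_eq hab] at hclose
  have hx := centeredPhase_mem_Icc hab hθ
  have hsin := abs_lt.mp hclose
  refine ⟨fun him => ⟨hθ.1, ?_⟩, fun him => ⟨?_, hθ.2⟩⟩
  · rw [← (centeredPhase_strictMono hab).le_iff_le, centeredPhase_two_thirds hab]
    exact (lt_pi_div_six_of_sin_lt hx (by linarith)).le
  · rw [← (centeredPhase_strictMono hab).le_iff_le, centeredPhase_one_third hab]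
    exact (neg_pi_div_six_lt_of_lt_sin hx (by linarith)).le
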